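/- arXiv:0709.0854 — 4 statements merged into one kernel-verified Lean document; each statement's English description precedes it below -/
import Mathlib

section
/- Let ψ : ℤ_{≥0} → ℝ_{>0} be non-increasing and 1 ≤ ℓ ≤ n. If ∑_{h=1}^∞ h^{n-1} ψ(h) < ∞, then the set of α ∈ ℝⁿ such that ‖x₁α₁ + ⋯ + xₙαₙ‖ ≤ ψ(H(x)) for infinitely many x ∈ ℤⁿ with max{|x_{ℓ+1}|,...,|xₙ|} < max{|x₁|,...,|x_ℓ|} has Lebesgue measure zero. -/
/-!
A point `α` of a unit cube with `‖x · α‖ ≤ ψ (H x)` for infinitely many `x` lies in infinitely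
many of the sets `E k` of points with `‖x · α‖ ≤ ψ (k + 1)` for some `x` of height `k + 1`.
If `x i ≠ 0`, every line in the direction of the `i`-th coordinate meets the unit cube and
`{‖x · α‖ ≤ ε}` in measure at most `4 ε`, so by Fubini and the count of integer vectors of
height `k + 1`, `vol (E k) ≪ (k + 1) ^ (n - 1) ψ (k + 1)`, which is summable. Borel–Cantelli
makes the limsup null in each of the countably many integer unit cubes. The cone condition
only shrinks the set.
-/

open Finset MeasureTheory

/-- Distance to the nearest integer. -/
noncomputable def dnint (r : ℝ) : ℝ := |r - round r|

/-- Height of an integer vector: maximum of absolute values of coordinates. -/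
def Hgt {n : ℕ} (x : Fin n → ℤ) : ℕ := Finset.univ.sup fun i => (x i).natAbs

/-- The cone condition: the height is attained among the first `ℓ` coordinates. -/
def cone {n : ℕ} (ℓ : ℕ) (x : Fin n → ℤ) : Prop :=
  ((Finset.univ.filter fun i : Fin n => ℓ ≤ (i : ℕ)).sup fun i => (x i).natAbs) <
  ((Finset.univ.filter fun i : Fin n => (i : ℕ) < ℓ).sup fun i => (x i).natAbs)

/-- The restricted Diophantine exponent `μ_{n,ℓ}(α)`. -/
noncomputable def mu (n ℓ : ℕ) (α : Fin n → ℝ) : ℝ :=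
  sSup {m : ℝ | 0 ≤ m ∧ {x : Fin n → ℤ | cone ℓ x ∧
    0 < dnint (∑ i, (x i : ℝ) * α i) ∧
    dnint (∑ i, (x i : ℝ) * α i) ≤ (Hgt x : ℝ) ^ (-m)}.Infinite}

open Filter Set
open scoped ENNReal

lemma dnint_le_abs_sub_intCast (r : ℝ) (k : ℤ) : dnint r ≤ |r - k| := round_le r k

lemma dnint_neg (r : ℝ) : dnint (-r) = dnint r := by
  have key (s : ℝ) : dnint (-s) ≤ dnint s := by
    calc dnint (-s) ≤ |-s - ((-round s : ℤ) : ℝ)| := dnint_le_abs_sub_intCast _ _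
      _ = dnint s := by rw [dnint, ← abs_neg]; push_cast; ring_nf
  exact le_antisymm (key r) (by simpa using key (-r))

lemma measurable_dnint : Measurable dnint := by
  have hround : Measurable fun r : ℝ => ((round r : ℤ) : ℝ) := by
    simp_rw [round_eq]
    exact measurable_from_top.comp (measurable_id.add_const _).floor
  exact (measurable_id.sub hround).abs

lemma volume_Ico_inter_dnint_le_of_pos (a c : ℝ) {m : ℤ} (hm : 0 < m) {ε : ℝ} (hε : 0 ≤ ε) :
    volume (Ico a (a + 1) ∩ {t | dnint (c + m * t) ≤ ε}) ≤ ENNReal.ofReal (4 * ε) := by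
  rcases le_or_gt (1 / 4 : ℝ) ε with hbig | hsmall
  · calc volume (Ico a (a + 1) ∩ {t | dnint (c + m * t) ≤ ε})
        ≤ volume (Ico a (a + 1)) := measure_mono inter_subset_left
      _ = ENNReal.ofReal 1 := by simp [Real.volume_Ico]
      _ ≤ ENNReal.ofReal (4 * ε) := ENNReal.ofReal_le_ofReal (by linarith)
  have hm' : (0 : ℝ) < m := by exact_mod_cast hm
  have hm1 : (1 : ℝ) ≤ m := by exact_mod_cast hm
  -- the integers `k` within `ε` of `c + m t` for some `t ∈ [a, a + 1)`
  set K := Finset.Icc ⌈c + m * a - ε⌉ ⌊c + m * a + m + ε⌋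
  have hcover : Ico a (a + 1) ∩ {t | dnint (c + m * t) ≤ ε} ⊆
      ⋃ k ∈ K, Icc ((k - c - ε) / m) ((k - c + ε) / m) := by
    rintro t ⟨⟨hat, hta⟩, hd⟩
    have hk := abs_le.mp (show |c + m * t - round (c + m * t)| ≤ ε from hd)
    have : m * a ≤ m * t := by nlinarith
    have : m * t ≤ m * a + m := by nlinarith
    refine mem_biUnion (x := round (c + m * t)) (Finset.mem_Icc.mpr ⟨?_, ?_⟩) ⟨?_, ?_⟩
    · exact Int.ceil_le.mpr (by linarith)
    · exact Int.le_floor.mpr (by linarith)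
    · rw [div_le_iff₀ hm']; linarith
    · rw [le_div_iff₀ hm']; linarith
  have hcard : (K.card : ℝ) ≤ m + 1 := by
    have hlt : ⌊c + m * a + m + ε⌋ < ⌈c + m * a - ε⌉ + m + 1 := by
      have := Int.floor_le (c + m * a + m + ε)
      have := Int.le_ceil (c + m * a - ε)
      exact_mod_cast (show (⌊c + m * a + m + ε⌋ : ℝ) < ⌈c + m * a - ε⌉ + m + 1 by linarith)
    have : (K.card : ℤ) ≤ m + 1 := by rw [Int.card_Icc]; omega
    exact_mod_cast this
  calc volume (Ico a (a + 1) ∩ {t | dnint (c + m * t) ≤ ε})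
      ≤ ∑ k ∈ K, volume (Icc ((k - c - ε) / m) ((k - c + ε) / m)) :=
        (measure_mono hcover).trans (measure_biUnion_finset_le K _)
    _ = K.card * ENNReal.ofReal (2 * ε / m) := by
        simp_rw [Real.volume_Icc, ← sub_div, show ∀ k : ℤ, (k - c + ε - (k - c - ε) : ℝ) = 2 * ε
          from fun k => by ring, Finset.sum_const, nsmul_eq_mul]
    _ ≤ ENNReal.ofReal (4 * ε) := by
        rw [← ENNReal.ofReal_natCast, ← ENNReal.ofReal_mul (by positivity)]
        refine ENNReal.ofReal_le_ofReal ?_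
        rw [mul_div_assoc', div_le_iff₀ hm']
        nlinarith

lemma volume_Ico_inter_dnint_le (a c : ℝ) {m : ℤ} (hm : m ≠ 0) {ε : ℝ} (hε : 0 ≤ ε) :
    volume (Ico a (a + 1) ∩ {t | dnint (c + m * t) ≤ ε}) ≤ ENNReal.ofReal (4 * ε) := by
  rcases hm.lt_or_gt with hneg | hpos
  · have hset : {t : ℝ | dnint (c + m * t) ≤ ε} = {t | dnint (-c + ((-m : ℤ) : ℝ) * t) ≤ ε} := by
      ext t
      rw [mem_ofPred_eq, mem_ofPred_eq, ← dnint_neg]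
      push_cast
      ring_nf
    rw [hset]
    exact volume_Ico_inter_dnint_le_of_pos a (-c) (neg_pos.mpr hneg) hε
  · exact volume_Ico_inter_dnint_le_of_pos a c hpos hε

lemma measurableSet_pi_Ico_inter_dnint_le {n : ℕ} (a : Fin n → ℝ) (x : Fin n → ℤ) (ε : ℝ) :
    MeasurableSet ((univ.pi fun j => Ico (a j) (a j + 1)) ∩
      {α | dnint (∑ j, (x j : ℝ) * α j) ≤ ε}) :=
  (MeasurableSet.univ_pi fun _ => measurableSet_Ico).inter
    (measurableSet_le (measurable_dnint.comp (by fun_prop)) measurable_const)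

lemma volume_pi_Ico_inter_dnint_le {n : ℕ} (a : Fin n → ℝ) {x : Fin n → ℤ} (hx : x ≠ 0)
    {ε : ℝ} (hε : 0 ≤ ε) :
    volume ((univ.pi fun j => Ico (a j) (a j + 1)) ∩
      {α | dnint (∑ j, (x j : ℝ) * α j) ≤ ε}) ≤ ENNReal.ofReal (4 * ε) := by
  obtain ⟨i, hi⟩ : ∃ i, x i ≠ 0 := Function.ne_iff.mp hx
  cases n with
  | zero => exact i.elim0
  | succ n =>
  set A := (univ.pi fun j => Ico (a j) (a j + 1)) ∩ {α | dnint (∑ j, (x j : ℝ) * α j) ≤ ε}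
  set B : Set (Fin n → ℝ) := univ.pi fun j => Ico (a (i.succAbove j)) (a (i.succAbove j) + 1)
  have he := (volume_preserving_piFinSuccAbove (fun _ : Fin (n + 1) => ℝ) i).symm
  have hslice (y : Fin n → ℝ) : volume ((fun t => (t, y)) ⁻¹'
      ((MeasurableEquiv.piFinSuccAbove (fun _ => ℝ) i).symm ⁻¹' A)) ≤
        B.indicator (fun _ => ENNReal.ofReal (4 * ε)) y := by
    have hmem (t : ℝ) : i.insertNth t y ∈ A ↔ (t ∈ Ico (a i) (a i + 1) ∧ y ∈ B) ∧
        dnint ((∑ j, (x (i.succAbove j) : ℝ) * y j) + x i * t) ≤ ε := by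
      simp [A, B, Fin.forall_iff_succAbove i, Fin.sum_univ_succAbove _ i, add_comm]
    by_cases hy : y ∈ B
    · rw [indicator_of_mem hy]
      refine le_trans (measure_mono fun t ht => ?_) (volume_Ico_inter_dnint_le (a i)
        (∑ j, (x (i.succAbove j) : ℝ) * y j) hi hε)
      have := (hmem t).mp ht
      exact ⟨this.1.1, this.2⟩
    · rw [indicator_of_notMem hy]
      exact (measure_mono_null (fun t ht => hy ((hmem t).mp ht).1.2) measure_empty).le
  have hB : MeasurableSet B := MeasurableSet.univ_pi fun _ => measurableSet_Ico
  calc volume A = volume ((MeasurableEquiv.piFinSuccAbove (fun _ => ℝ) i).symm ⁻¹' A) :=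
        (he.measure_preimage_equiv A).symm
    _ ≤ ∫⁻ y, B.indicator (fun _ => ENNReal.ofReal (4 * ε)) y := by
        rw [Measure.volume_eq_prod, Measure.prod_apply_symm]
        exacts [lintegral_mono hslice, (measurableSet_pi_Ico_inter_dnint_le a x ε).preimage
          (MeasurableEquiv.measurable _)]
    _ = ENNReal.ofReal (4 * ε) := by
        simp [lintegral_indicator_const hB, B, Real.volume_pi_Ico]

noncomputable def heightBall (n h : ℕ) : Finset (Fin n → ℤ) :=
  Fintype.piFinset fun _ => Finset.Icc (-(h : ℤ)) h

lemma mem_heightBall {n h : ℕ} {x : Fin n → ℤ} : x ∈ heightBall n h ↔ Hgt x ≤ h := by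
  simp only [heightBall, Fintype.mem_piFinset, Finset.mem_Icc, Hgt, Finset.sup_le_iff,
    Finset.mem_univ, true_implies]
  exact forall_congr' fun i => by omega

lemma card_heightBall_succ_sdiff_le (n k : ℕ) :
    #(heightBall n (k + 1) \ heightBall n k) ≤ 2 * n * 3 ^ (n - 1) * (k + 1) ^ (n - 1) := by
  have hsub : heightBall n k ⊆ heightBall n (k + 1) := fun x hx => by
    rw [mem_heightBall] at hx ⊢; omega
  have hcard (h : ℕ) : #(heightBall n h) = (2 * h + 1) ^ n := by
    simp only [heightBall, Fintype.card_piFinset, Int.card_Icc, prod_const, Finset.card_univ,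
      Fintype.card_fin]
    congr 1
    omega
  have hshell : #(heightBall n (k + 1) \ heightBall n k) ≤ 2 * n * (2 * k + 3) ^ (n - 1) := by
    have hle : (2 * k + 1) ^ n ≤ (2 * k + 3) ^ n := Nat.pow_le_pow_left (by omega) n
    have key := (le_abs_self _).trans (abs_pow_sub_pow_le (α := ℤ) (2 * k + 3) (2 * k + 1) n)
    have hmax : max |(2 * k + 3 : ℤ)| |2 * k + 1| = 2 * k + 3 := by
      rw [abs_of_nonneg (by positivity), abs_of_nonneg (by positivity)]
      exact max_eq_left (by omega)
    rw [hmax, show (2 * k + 3 : ℤ) - (2 * k + 1) = 2 by ring, abs_two] at key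
    rw [card_sdiff_of_subset hsub, hcard, hcard, show 2 * (k + 1) + 1 = 2 * k + 3 by ring]
    zify [hle]
    exact key
  calc _ ≤ 2 * n * (2 * k + 3) ^ (n - 1) := hshell
    _ ≤ 2 * n * (3 * (k + 1)) ^ (n - 1) := by gcongr; omega
    _ = 2 * n * 3 ^ (n - 1) * (k + 1) ^ (n - 1) := by rw [mul_pow]; ring

lemma Set.Infinite.exists_lt_Hgt {n : ℕ} {T : Set (Fin n → ℤ)} (hT : T.Infinite) (N : ℕ) :
    ∃ x ∈ T, N < Hgt x := by
  obtain ⟨x, hxT, hx⟩ := hT.exists_notMem_finset (heightBall n N)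
  exact ⟨x, hxT, not_le.mp (mem_heightBall.not.mp hx)⟩

def shellApprox (ψ : ℕ → ℝ) {n : ℕ} (a : Fin n → ℝ) (k : ℕ) : Set (Fin n → ℝ) :=
  ⋃ x ∈ heightBall n (k + 1) \ heightBall n k,
    (univ.pi fun j => Ico (a j) (a j + 1)) ∩ {α | dnint (∑ j, (x j : ℝ) * α j) ≤ ψ (k + 1)}

lemma volume_shellApprox_le {ψ : ℕ → ℝ} (hψ : ∀ h, 0 ≤ ψ h) {n : ℕ} (a : Fin n → ℝ) (k : ℕ) :
    volume (shellApprox ψ a k) ≤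
      ENNReal.ofReal (8 * n * 3 ^ (n - 1) * (((k + 1 : ℕ) : ℝ) ^ (n - 1) * ψ (k + 1))) := by
  set S := heightBall n (k + 1) \ heightBall n k
  have hterm : ∀ x ∈ S, volume ((univ.pi fun j => Ico (a j) (a j + 1)) ∩
      {α | dnint (∑ j, (x j : ℝ) * α j) ≤ ψ (k + 1)}) ≤ ENNReal.ofReal (4 * ψ (k + 1)) := by
    intro x hx
    refine volume_pi_Ico_inter_dnint_le a ?_ (hψ _)
    rintro rfl
    exact (Finset.mem_sdiff.mp hx).2 (mem_heightBall.mpr (by simp [Hgt]))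
  have hcard : (#S : ℝ) ≤ 2 * n * 3 ^ (n - 1) * ((k + 1 : ℕ) : ℝ) ^ (n - 1) := by
    exact_mod_cast card_heightBall_succ_sdiff_le n k
  calc volume (shellApprox ψ a k) ≤ ∑ _x ∈ S, ENNReal.ofReal (4 * ψ (k + 1)) :=
        (measure_biUnion_finset_le S _).trans (Finset.sum_le_sum hterm)
    _ = ENNReal.ofReal (#S * (4 * ψ (k + 1))) := by
        rw [Finset.sum_const, nsmul_eq_mul, ENNReal.ofReal_mul (Nat.cast_nonneg _),
          ENNReal.ofReal_natCast]
    _ ≤ _ := by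
        refine ENNReal.ofReal_le_ofReal ?_
        nlinarith [hψ (k + 1)]

lemma mem_limsup_shellApprox {ψ : ℕ → ℝ} {n : ℕ} {a α : Fin n → ℝ}
    (hα : α ∈ univ.pi fun j => Ico (a j) (a j + 1))
    (h : {x : Fin n → ℤ | dnint (∑ i, (x i : ℝ) * α i) ≤ ψ (Hgt x)}.Infinite) :
    α ∈ limsup (shellApprox ψ a) atTop := by
  rw [mem_limsup_iff_frequently_mem, frequently_atTop]
  intro N
  obtain ⟨x, hxψ, hN⟩ := h.exists_lt_Hgt N
  have hx : Hgt x - 1 + 1 = Hgt x := by omega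
  refine ⟨Hgt x - 1, by omega, mem_biUnion (x := x) ?_ ⟨hα, ?_⟩⟩
  · rw [Finset.mem_coe, Finset.mem_sdiff, mem_heightBall, mem_heightBall, hx]
    omega
  · rw [hx]
    exact hxψ

theorem volume_setOf_infinite_dnint_le_eq_zero {n : ℕ} {ψ : ℕ → ℝ} (hψ : ∀ h, 0 ≤ ψ h)
    (hconv : Summable fun h : ℕ => (h : ℝ) ^ (n - 1) * ψ h) :
    volume {α : Fin n → ℝ |
      {x : Fin n → ℤ | dnint (∑ i, (x i : ℝ) * α i) ≤ ψ (Hgt x)}.Infinite} = 0 := by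
  have hsum : Summable fun k : ℕ =>
      8 * n * 3 ^ (n - 1) * (((k + 1 : ℕ) : ℝ) ^ (n - 1) * ψ (k + 1)) :=
    ((summable_nat_add_iff 1).mpr hconv).mul_left _
  have hnull (v : Fin n → ℤ) : volume (limsup (shellApprox ψ fun j => (v j : ℝ)) atTop) = 0 := by
    refine measure_limsup_atTop_eq_zero (ne_top_of_le_ne_top ?_
      (ENNReal.tsum_le_tsum fun k => volume_shellApprox_le hψ _ k))
    rw [← ENNReal.ofReal_tsum_of_nonneg (fun k => by have := hψ (k + 1); positivity) hsum]
    exact ENNReal.ofReal_ne_top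
  refine measure_mono_null (fun α hα => mem_iUnion.mpr ⟨fun j => ⌊α j⌋, ?_⟩)
    (measure_iUnion_null hnull)
  exact mem_limsup_shellApprox (fun j _ => ⟨Int.floor_le _, Int.lt_floor_add_one _⟩) hα

theorem khintchine_groshev_restricted_convergence_general (n ℓ : ℕ)
    (ψ : ℕ → ℝ) (hpos : ∀ h, 0 < ψ h)
    (hconv : Summable fun h : ℕ => (h : ℝ) ^ (n - 1) * ψ h) :
    volume {α : Fin n → ℝ | {x : Fin n → ℤ | cone ℓ x ∧
      dnint (∑ i, (x i : ℝ) * α i) ≤ ψ (Hgt x)}.Infinite} = 0 :=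
  measure_mono_null (fun _ hα => hα.mono fun _ hx => hx.2)
    (volume_setOf_infinite_dnint_le_eq_zero (fun h => (hpos h).le) hconv)

theorem khintchine_groshev_restricted_convergence (n ℓ : ℕ) (hℓ : 1 ≤ ℓ) (hn : ℓ ≤ n)
    (ψ : ℕ → ℝ) (hpos : ∀ h, 0 < ψ h) (hmono : Antitone ψ)
    (hconv : Summable fun h : ℕ => (h : ℝ) ^ (n - 1) * ψ h) :
    volume {α : Fin n → ℝ | {x : Fin n → ℤ | cone ℓ x ∧
      dnint (∑ i, (x i : ℝ) * α i) ≤ ψ (Hgt x)}.Infinite} = 0 :=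
  khintchine_groshev_restricted_convergence_general n ℓ ψ hpos hconv
end

section
/- If x, x' ∈ ℤⁿ are linearly independent over ℚ, then for any non-increasing ψ : ℤ_{≥0} → ℝ_{>0} with values ≤ 1/2, the sets B(x) and B(x') are independent with respect to Lebesgue measure on [0,1]ⁿ: |B(x) ∩ B(x')| = |B(x)|·|B(x')|. -/
/-!
Reduce the linear forms `α ↦ x · α` and `α ↦ x' · α` modulo `1`. The resulting map from the
unit cube to `(ℝ/ℤ)²` factors through the torus `(ℝ/ℤ)ⁿ` and the continuous homomorphism
`t ↦ (∑ xᵢ tᵢ, ∑ x'ᵢ tᵢ)`, which is onto because linear independence gives a non-vanishing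
`2 × 2` minor of `(x, x')`. A continuous surjective homomorphism of compact groups carries Haar
measure to Haar measure, so under Lebesgue measure on the cube the two reduced forms are
independent, and `B(x)`, `B(x')` are preimages of balls under them.
-/

open Finset MeasureTheory

open Set ProbabilityTheory

lemma dnint_eq_norm_coe (r : ℝ) : dnint r = ‖(r : UnitAddCircle)‖ := by
  rw [AddCircle.norm_eq]
  simp [dnint]

instance UnitAddCircle.isProbabilityMeasure_volume :
    IsProbabilityMeasure (volume : Measure UnitAddCircle) :=
  ⟨UnitAddCircle.measure_univ⟩

section

variable {ι : Type*} [Fintype ι]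

lemma exists_minor_ne_zero_of_linearIndependent {x x' : ι → ℤ}
    (hind : LinearIndependent ℚ ![fun i => (x i : ℚ), fun i => (x' i : ℚ)]) :
    ∃ i j, x i * x' j - x j * x' i ≠ 0 := by
  by_contra! hminors
  rw [LinearIndependent.pair_iff] at hind
  rcases eq_or_ne x 0 with rfl | hx
  · exact one_ne_zero (hind 1 0 (by ext; simp)).1
  obtain ⟨i, hi⟩ := Function.ne_iff.mp hx
  have hcomb : ((x' i : ℚ) • fun k => (x k : ℚ)) + (-(x i : ℚ)) • (fun k => (x' k : ℚ)) = 0 := by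
    ext j
    have hq : (x i : ℚ) * x' j = x j * x' i := by exact_mod_cast sub_eq_zero.mp (hminors i j)
    simp only [Pi.add_apply, Pi.smul_apply, smul_eq_mul, Pi.zero_apply, neg_mul]
    linarith
  exact hi (by exact_mod_cast neg_eq_zero.mp (hind _ _ hcomb).2)

namespace UnitAddTorus

noncomputable def intCombination (y : ι → ℤ) : UnitAddTorus ι →+ UnitAddCircle :=
  AddMonoidHom.mk' (fun t => ∑ i, y i • t i) fun s t => by
    simp only [Pi.add_apply, smul_add, sum_add_distrib]

lemma continuous_intCombination (y : ι → ℤ) : Continuous (intCombination y) :=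
  continuous_finsetSum _ fun i _ => (continuous_zsmul _).comp (continuous_apply i)

lemma intCombination_apply_coe (y : ι → ℤ) (α : ι → ℝ) :
    intCombination y (fun i => (α i : UnitAddCircle)) =
      ((∑ i, y i * α i : ℝ) : UnitAddCircle) := by
  simp only [intCombination, AddMonoidHom.mk'_apply, ← AddCircle.coe_zsmul, zsmul_eq_mul,
    QuotientAddGroup.mk_sum]

lemma surjective_intCombination_prod {x x' : ι → ℤ} {i j : ι}
    (hij : x i * x' j - x j * x' i ≠ 0) :
    Function.Surjective ((intCombination x).prod (intCombination x')) := by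
  classical
  have hne : i ≠ j := by rintro rfl; exact hij (by ring)
  have hsum (y : ι → ℤ) (a b : ℝ) :
      ∑ k, (y k : ℝ) * (Pi.single i a + Pi.single j b : ι → ℝ) k = y i * a + y j * b := by
    rw [Fintype.sum_eq_add i j hne fun k hk => by simp [hk.1, hk.2]]
    simp [hne, hne.symm]
  rintro ⟨u, v⟩
  obtain ⟨s, rfl⟩ := QuotientAddGroup.mk_surjective u
  obtain ⟨t, rfl⟩ := QuotientAddGroup.mk_surjective v
  have hdet : ((x i : ℝ) * x' j - x j * x' i) ≠ 0 := by exact_mod_cast hij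
  -- Cramer's rule for `x i * a + x j * b = s`, `x' i * a + x' j * b = t`.
  set a := (s * x' j - t * x j) / ((x i : ℝ) * x' j - x j * x' i)
  set b := (x i * t - x' i * s) / ((x i : ℝ) * x' j - x j * x' i)
  refine ⟨fun k => ((Pi.single i a + Pi.single j b : ι → ℝ) k : UnitAddCircle), ?_⟩
  simp only [AddMonoidHom.prod_apply, intCombination_apply_coe, hsum, Prod.mk.injEq]
  constructor <;> congr 1 <;>
    rw [mul_div_assoc', mul_div_assoc', ← add_div, div_eq_iff hdet] <;> ring

lemma measurePreserving_coe_unitCube :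
    MeasurePreserving (fun (α : ι → ℝ) i => (α i : UnitAddCircle))
      (volume.restrict (Icc 0 1)) volume := by
  rw [volume_pi, volume_pi, ← Measure.restrict_congr_set Measure.univ_pi_Ioc_ae_eq_Icc,
    Measure.restrict_pi_pi]
  exact measurePreserving_pi _ _ fun _ => by simpa using UnitAddCircle.measurePreserving_mk 0

end UnitAddTorus

open UnitAddTorus

instance isProbabilityMeasure_restrict_unitCube :
    IsProbabilityMeasure ((volume : Measure (ι → ℝ)).restrict (Icc 0 1)) :=
  ⟨by simp [Real.volume_Icc_pi]⟩

theorem indepFun_coe_sum_mul_unitCube {x x' : ι → ℤ} {i j : ι}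
    (hij : x i * x' j - x j * x' i ≠ 0) :
    IndepFun (fun α : ι → ℝ => ((∑ k, x k * α k : ℝ) : UnitAddCircle))
      (fun α => ((∑ k, x' k * α k : ℝ) : UnitAddCircle)) (volume.restrict (Icc 0 1)) := by
  have hpair : MeasurePreserving
      (fun α : ι → ℝ =>
        (((∑ k, x k * α k : ℝ) : UnitAddCircle), ((∑ k, x' k * α k : ℝ) : UnitAddCircle)))
      (volume.restrict (Icc 0 1)) (volume.prod volume) := by
    have hhom := ((intCombination x).prod (intCombination x')).measurePreserving
      ((continuous_intCombination x).prodMk (continuous_intCombination x'))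
      (surjective_intCombination_prod hij) (μ := (volume : Measure (UnitAddTorus ι)))
      (ν := volume.prod volume) (by simp)
    simpa [Function.comp_def, intCombination_apply_coe] using
      hhom.comp measurePreserving_coe_unitCube
  have hfst := measurePreserving_fst.comp hpair
  have hsnd := measurePreserving_snd.comp hpair
  refine (indepFun_iff_map_prod_eq_prod_map_map hfst.aemeasurable hsnd.aemeasurable).2 ?_
  exact hpair.map_eq.trans (congrArg₂ Measure.prod hfst.map_eq.symm hsnd.map_eq.symm)

end

theorem measure_B_inter_independent_general (n : ℕ) (ψ : ℕ → ℝ)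
    (x x' : Fin n → ℤ)
    (hind : LinearIndependent ℚ ![fun i => (x i : ℚ), fun i => (x' i : ℚ)]) :
    volume ({α : Fin n → ℝ | α ∈ Set.Icc (0 : Fin n → ℝ) 1 ∧
        dnint (∑ i, (x i : ℝ) * α i) ≤ ψ (Hgt x)} ∩
      {α : Fin n → ℝ | α ∈ Set.Icc (0 : Fin n → ℝ) 1 ∧
        dnint (∑ i, (x' i : ℝ) * α i) ≤ ψ (Hgt x')}) =
    volume {α : Fin n → ℝ | α ∈ Set.Icc (0 : Fin n → ℝ) 1 ∧
        dnint (∑ i, (x i : ℝ) * α i) ≤ ψ (Hgt x)} *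
    volume {α : Fin n → ℝ | α ∈ Set.Icc (0 : Fin n → ℝ) 1 ∧
        dnint (∑ i, (x' i : ℝ) * α i) ≤ ψ (Hgt x')} := by
  obtain ⟨i, j, hij⟩ := exists_minor_ne_zero_of_linearIndependent hind
  have hsep (P : (Fin n → ℝ) → Prop) :
      volume {α | α ∈ Icc (0 : Fin n → ℝ) 1 ∧ P α} = volume.restrict (Icc 0 1) {α | P α} := by
    rw [Measure.restrict_apply' measurableSet_Icc, inter_comm]; rfl
  simp only [← sep_and, hsep, dnint_eq_norm_coe, ← mem_closedBall_zero_iff]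
  exact (indepFun_coe_sum_mul_unitCube hij).measure_inter_preimage_eq_mul _ _
    Metric.isClosed_closedBall.measurableSet Metric.isClosed_closedBall.measurableSet

theorem measure_B_inter_independent (n : ℕ) (ψ : ℕ → ℝ)
    (hpos : ∀ h, 0 < ψ h) (hhalf : ∀ h, ψ h ≤ 1 / 2) (hmono : Antitone ψ)
    (x x' : Fin n → ℤ)
    (hind : LinearIndependent ℚ ![fun i => (x i : ℚ), fun i => (x' i : ℚ)]) :
    volume ({α : Fin n → ℝ | α ∈ Set.Icc (0 : Fin n → ℝ) 1 ∧
        dnint (∑ i, (x i : ℝ) * α i) ≤ ψ (Hgt x)} ∩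
      {α : Fin n → ℝ | α ∈ Set.Icc (0 : Fin n → ℝ) 1 ∧
        dnint (∑ i, (x' i : ℝ) * α i) ≤ ψ (Hgt x')}) =
    volume {α : Fin n → ℝ | α ∈ Set.Icc (0 : Fin n → ℝ) 1 ∧
        dnint (∑ i, (x i : ℝ) * α i) ≤ ψ (Hgt x)} *
    volume {α : Fin n → ℝ | α ∈ Set.Icc (0 : Fin n → ℝ) 1 ∧
        dnint (∑ i, (x' i : ℝ) * α i) ≤ ψ (Hgt x')} :=
  measure_B_inter_independent_general n ψ x x' hind
end

section
/- Let ψ : ℤ_{≥0} → ℝ_{>0} be non-increasing, and let f be a dimension function such that r ↦ r^{-n} f(r) is increasing and g(r) = r^{-(n-1)} f(r) is also a dimension function. If ∑_{r=1}^∞ rⁿ g(ψ(r)/r) < ∞, then the Hausdorff f-measure of ℒ_{n,ℓ}(ψ) is zero. -/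
/-!
Restrict to a box `‖α‖ ≤ R`. For `x ≠ 0` of height `h` put `δ = ψ(h)/h` and pick `i₀` with
`|x_{i₀}| = h`. The `α` in the box with `‖x·α‖ ≤ ψ(h) = hδ` lie in the slabs `|x·α - m| ≤ hδ`,
`|m| = O(h)`; placing the coordinates other than `i₀` on the grid `δℤ` and solving for the
`i₀`-th one covers each slab by `O(δ^{-(n-1)})` sup-norm balls of diameter `δ`. So `x` costs
`O(h g(δ))` with `g(r) = f(r)/r^{n-1}`, and since there are `O(h^{n-1})` vectors of height `h`
the total cost is dominated by `∑ hⁿ g(ψ(h)/h) < ∞`. As `δ → 0`, discarding finitely many `x`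
leaves covers that are arbitrarily fine and arbitrarily cheap (Hausdorff–Cantelli).
-/

open Finset MeasureTheory ENNReal

open Filter Topology

theorem MeasureTheory.Measure.mkMetric_eq_zero_of_infinitely_covered {X ι : Type*}
    [EMetricSpace X] [MeasurableSpace X] [BorelSpace X] [Countable ι] {m : ℝ≥0∞ → ℝ≥0∞}
    {s : Set X} (C : ι → Finset (Set X)) (ρ : ι → ℝ≥0∞)
    (hρ : Tendsto ρ Filter.cofinite (𝓝 0))
    (hdiam : ∀ i, ∀ t ∈ C i, Metric.ediam t ≤ ρ i)
    (hs : ∀ x ∈ s, {i | ∃ t ∈ C i, x ∈ t}.Infinite)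
    (hsum : ∑' i, ∑ t ∈ C i, m (Metric.ediam t) ≠ ∞) :
    mkMetric m s = 0 := by
  let r : Finset ι → ℝ≥0∞ := fun F => ⨆ i : {i // i ∉ F}, ρ i
  have hr : Tendsto r atTop (𝓝 0) := by
    refine ENNReal.tendsto_nhds_zero.2 fun ε hε => ?_
    have hfin : {i | ¬ρ i ≤ ε}.Finite := ENNReal.tendsto_nhds_zero.1 hρ ε hε
    filter_upwards [eventually_ge_atTop hfin.toFinset] with F hF
    exact iSup_le fun i => not_not.1 fun h => i.2 (hF (hfin.mem_toFinset.2 h))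
  have hcover : ∀ F : Finset ι, s ⊆ ⋃ p : Σ i : {i // i ∉ F}, C i, (p.2 : Set X) := by
    intro F x hx
    obtain ⟨i, ⟨t, ht, hxt⟩, hiF⟩ := ((hs x hx).sdiff F.finite_toSet).nonempty
    exact Set.mem_iUnion.2 ⟨⟨⟨i, hiF⟩, ⟨t, ht⟩⟩, hxt⟩
  have hle := mkMetric_le_liminf_tsum s r hr
    (fun F (p : Σ i : {i // i ∉ F}, C i) => (p.2 : Set X))
    (Eventually.of_forall fun F p =>
      (hdiam _ _ p.2.2).trans (le_iSup (fun i : {i // i ∉ F} => ρ i) p.1))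
    (Eventually.of_forall hcover) m
  have htail : Tendsto (fun F : Finset ι =>
      ∑' p : Σ i : {i // i ∉ F}, C i, m (Metric.ediam (p.2 : Set X))) atTop (𝓝 0) := by
    simp_rw [ENNReal.tsum_sigma', Finset.tsum_subtype (C _) fun t => m (Metric.ediam t)]
    exact ENNReal.tendsto_tsum_compl_atTop_zero hsum
  exact le_antisymm (hle.trans htail.liminf_eq.le) zero_le

theorem Metric.ediam_closedBall_half_le {X : Type*} [PseudoMetricSpace X] (x : X) (r : ℝ) :
    ediam (closedBall x (r / 2)) ≤ ENNReal.ofReal r :=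
  ediam_le_of_forall_dist_le fun y hy z hz =>
    (dist_triangle_right y z x).trans (by linarith [mem_closedBall.1 hy, mem_closedBall.1 hz])

theorem sum_ofReal_comp_ediam_closedBall_le {X : Type*} [PseudoMetricSpace X] {f : ℝ → ℝ}
    (hf : MonotoneOn f (Set.Ici 0)) (S : Finset X) {δ : ℝ} (hδ : 0 ≤ δ) :
    ∑ t ∈ S.image (Metric.closedBall · (δ / 2)), ENNReal.ofReal (f (Metric.ediam t).toReal) ≤
      S.card * ENNReal.ofReal (f δ) := by
  calc _ ≤ (S.image (Metric.closedBall · (δ / 2))).card • ENNReal.ofReal (f δ) := by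
        refine Finset.sum_le_card_nsmul _ _ _ fun t ht => ?_
        obtain ⟨v, -, rfl⟩ := Finset.mem_image.1 ht
        have hdiam : (Metric.ediam (Metric.closedBall v (δ / 2))).toReal ≤ δ :=
          ENNReal.toReal_le_of_le_ofReal hδ (Metric.ediam_closedBall_half_le v δ)
        exact ENNReal.ofReal_le_ofReal (hf ENNReal.toReal_nonneg hδ hdiam)
    _ ≤ S.card * ENNReal.ofReal (f δ) := by
        rw [nsmul_eq_mul]
        gcongr
        exact_mod_cast Finset.card_image_le

theorem abs_sub_mul_round_div_le (y : ℝ) {δ : ℝ} (hδ : 0 < δ) :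
    |y - δ * round (y / δ)| ≤ δ / 2 := by
  have h := abs_sub_round (y / δ)
  calc |y - δ * round (y / δ)| = δ * |y / δ - round (y / δ)| := by
        rw [← abs_of_pos hδ, ← abs_mul, abs_of_pos hδ, mul_sub, mul_div_cancel₀ _ hδ.ne']
    _ ≤ δ * (1 / 2) := by gcongr
    _ = δ / 2 := by ring

theorem abs_round_le (y : ℝ) : |(round y : ℝ)| ≤ |y| + 1 / 2 := by
  have := abs_sub_round y
  have := abs_sub_abs_le_abs_sub (round y : ℝ) y
  rw [abs_sub_comm] at this
  linarith

theorem Int.mem_Icc_neg_floor_of_abs_le {z : ℤ} {r : ℝ} (h : |(z : ℝ)| ≤ r) :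
    z ∈ Finset.Icc (-⌊r⌋) ⌊r⌋ := by
  rw [abs_le] at h
  have h₁ : -z ≤ ⌊r⌋ := Int.le_floor.2 (by push_cast; linarith)
  have h₂ : z ≤ ⌊r⌋ := Int.le_floor.2 h.2
  exact Finset.mem_Icc.2 ⟨by omega, h₂⟩

theorem Int.card_Icc_neg_floor_le {r : ℝ} (hr : 0 ≤ r) :
    ((Finset.Icc (-⌊r⌋) ⌊r⌋).card : ℝ) ≤ 2 * r + 1 := by
  have h₀ : 0 ≤ ⌊r⌋ := Int.floor_nonneg.2 hr
  have hcard : ((Finset.Icc (-⌊r⌋) ⌊r⌋).card : ℤ) = 2 * ⌊r⌋ + 1 := by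
    rw [Int.card_Icc]; omega
  have : ((Finset.Icc (-⌊r⌋) ⌊r⌋).card : ℝ) = 2 * ⌊r⌋ + 1 := by exact_mod_cast hcard
  linarith [Int.floor_le r]

theorem Fintype.card_piFinset_update_const {ι β : Type*} [Fintype ι] [DecidableEq ι]
    [DecidableEq β] (t : Finset β) (i₀ : ι) (t₀ : Finset β) :
    (Fintype.piFinset (Function.update (fun _ => t) i₀ t₀)).card =
      t₀.card * t.card ^ (Fintype.card ι - 1) := by
  have h := Finset.prod_update_of_mem (Finset.mem_univ i₀) (fun _ => t.card) t₀.card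
  rw [Finset.prod_const, Finset.card_sdiff_of_subset (by simp), Finset.card_singleton,
    Finset.card_univ] at h
  rw [Fintype.card_piFinset, ← h]
  exact Finset.prod_congr rfl fun i _ => by by_cases hi : i = i₀ <;> simp [hi]

theorem abs_sub_hyperplane_coord_le {n : ℕ} {a α w : Fin n → ℝ} {i₀ : Fin n}
    (hmax : ∀ i, |a i| ≤ |a i₀|) (ha : a i₀ ≠ 0) {δ m : ℝ}
    (hm : |∑ i, a i * α i - m| ≤ |a i₀| * δ) (hw₀ : w i₀ = 0)
    (hw : ∀ i ≠ i₀, |α i - w i| ≤ δ / 2) :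
    |α i₀ - (m - ∑ i, a i * w i) / a i₀| ≤ (n + 2) / 2 * δ := by
  have ha' : 0 < |a i₀| := abs_pos.2 ha
  have hδ : 0 ≤ δ := (mul_nonneg_iff_of_pos_left ha').1 ((abs_nonneg _).trans hm)
  set E := ∑ i ∈ Finset.univ.erase i₀, a i * (α i - w i)
  have hsplit : a i₀ * (α i₀ - w i₀) + E = ∑ i, a i * α i - ∑ i, a i * w i := by
    rw [Finset.add_sum_erase _ (fun i => a i * (α i - w i)) (Finset.mem_univ i₀)]
    simp only [mul_sub, Finset.sum_sub_distrib]
  have hkey : a i₀ * (α i₀ - (m - ∑ i, a i * w i) / a i₀) = (∑ i, a i * α i - m) - E := by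
    rw [hw₀, sub_zero] at hsplit
    field_simp
    linarith
  have hE : |E| ≤ n * (|a i₀| * (δ / 2)) :=
    calc |E| ≤ ∑ i ∈ Finset.univ.erase i₀, |a i * (α i - w i)| :=
          Finset.abs_sum_le_sum_abs _ _
      _ ≤ (Finset.univ.erase i₀).card • (|a i₀| * (δ / 2)) := by
        refine Finset.sum_le_card_nsmul _ _ _ fun i hi => ?_
        rw [abs_mul]
        exact mul_le_mul (hmax i) (hw i (Finset.ne_of_mem_erase hi)) (abs_nonneg _)
          (abs_nonneg _)
      _ ≤ n * (|a i₀| * (δ / 2)) := by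
        rw [nsmul_eq_mul]
        gcongr
        simp
  have : |a i₀| * |α i₀ - (m - ∑ i, a i * w i) / a i₀| ≤ |a i₀| * ((n + 2) / 2 * δ) := by
    rw [← abs_mul, hkey]
    calc |(∑ i, a i * α i - m) - E| ≤ |∑ i, a i * α i - m| + |E| := abs_sub _ _
      _ ≤ |a i₀| * ((n + 2) / 2 * δ) := by linarith
  exact le_of_mul_le_mul_left this ha'

section Slab

variable {n : ℕ}

/-- Centre of the ball labelled by `p = (m, j, k)` in the cover of the slab around
`a · α = m`: off `i₀` it is the grid point `δ j` (where `j i₀ = 0`), and its `i₀`-coordinate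
puts that grid point on the hyperplane `a · α = m` and then moves `k` steps of size `δ`. -/
noncomputable def slabCenter (a : Fin n → ℝ) (i₀ : Fin n) (δ : ℝ) (p : ℤ × (Fin n → ℤ) × ℤ) :
    Fin n → ℝ :=
  Function.update (fun i => δ * p.2.1 i) i₀
    ((p.1 - ∑ i, a i * (δ * p.2.1 i)) / a i₀ + δ * p.2.2)

noncomputable def slabIndex (i₀ : Fin n) (B J K : ℝ) : Finset (ℤ × (Fin n → ℤ) × ℤ) :=
  Finset.Icc (-⌊B⌋) ⌊B⌋ ×ˢ
    Fintype.piFinset (Function.update (fun _ => Finset.Icc (-⌊J⌋) ⌊J⌋) i₀ {0}) ×ˢ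
    Finset.Icc (-⌊K⌋) ⌊K⌋

theorem card_slabIndex_le (i₀ : Fin n) {B J K : ℝ} (hB : 0 ≤ B) (hJ : 0 ≤ J) (hK : 0 ≤ K) :
    ((slabIndex i₀ B J K).card : ℝ) ≤ (2 * B + 1) * ((2 * J + 1) ^ (n - 1) * (2 * K + 1)) := by
  simp only [slabIndex, Finset.card_product, Fintype.card_piFinset_update_const,
    Fintype.card_fin, Finset.card_singleton, one_mul]
  push_cast
  gcongr
  · exact Int.card_Icc_neg_floor_le hB
  · exact Int.card_Icc_neg_floor_le hJ
  · exact Int.card_Icc_neg_floor_le hK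

theorem abs_round_sum_mul_le {a α : Fin n → ℝ} {i₀ : Fin n} (hmax : ∀ i, |a i| ≤ |a i₀|)
    {R : ℝ} (hα : ‖α‖ ≤ R) :
    |(round (∑ i, a i * α i) : ℝ)| ≤ n * |a i₀| * R + dnint (∑ i, a i * α i) := by
  have hsum : |∑ i, a i * α i| ≤ n * |a i₀| * R :=
    calc |∑ i, a i * α i| ≤ ∑ i, |a i * α i| := Finset.abs_sum_le_sum_abs _ _
      _ ≤ Finset.univ.card • (|a i₀| * R) :=
        Finset.sum_le_card_nsmul _ _ _ fun i _ => by
          rw [abs_mul]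
          exact mul_le_mul (hmax i) ((norm_le_pi_norm α i).trans hα) (abs_nonneg _)
            (abs_nonneg _)
      _ = n * |a i₀| * R := by simp [mul_assoc]
  have := abs_sub_abs_le_abs_sub (round (∑ i, a i * α i) : ℝ) (∑ i, a i * α i)
  rw [abs_sub_comm] at this
  unfold dnint
  linarith

theorem slab_subset_iUnion_closedBall_slabCenter (a : Fin n → ℝ) {i₀ : Fin n}
    (hmax : ∀ i, |a i| ≤ |a i₀|) (ha : a i₀ ≠ 0) {R δ : ℝ} (hδ : 0 < δ) :
    {α | ‖α‖ ≤ R ∧ dnint (∑ i, a i * α i) ≤ |a i₀| * δ} ⊆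
      ⋃ p ∈ slabIndex i₀ (n * |a i₀| * R + |a i₀| * δ) (R / δ + 1 / 2) ((n + 3) / 2),
        Metric.closedBall (slabCenter a i₀ δ p) (δ / 2) := by
  rintro α ⟨hαR, hα⟩
  set m := round (∑ i, a i * α i)
  set j : Fin n → ℤ := Function.update (fun i => round (α i / δ)) i₀ 0
  set t₀ := ((m : ℝ) - ∑ i, a i * (δ * j i)) / a i₀
  have hj : ∀ i ≠ i₀, |α i - δ * j i| ≤ δ / 2 := fun i hi => by
    simpa only [j, Function.update_of_ne hi] using abs_sub_mul_round_div_le (α i) hδ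
  have ht₀ : |α i₀ - t₀| ≤ (n + 2) / 2 * δ :=
    abs_sub_hyperplane_coord_le (w := fun i => δ * j i) hmax ha hα (by simp [j]) hj
  refine Set.mem_iUnion₂.2 ⟨(m, j, round ((α i₀ - t₀) / δ)), ?_, ?_⟩
  · simp only [slabIndex, Finset.mem_product, Fintype.mem_piFinset]
    refine ⟨Int.mem_Icc_neg_floor_of_abs_le ?_, fun i => ?_,
      Int.mem_Icc_neg_floor_of_abs_le ((abs_round_le _).trans ?_)⟩
    · linarith [abs_round_sum_mul_le hmax hαR]
    · by_cases hi : i = i₀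
      · subst hi; simp [j]
      · simp only [j, Function.update_of_ne hi]
        refine Int.mem_Icc_neg_floor_of_abs_le ((abs_round_le _).trans ?_)
        rw [abs_div, abs_of_pos hδ]
        exact add_le_add_left (div_le_div_of_nonneg_right
          ((norm_le_pi_norm α i).trans hαR) hδ.le) _
    · rw [abs_div, abs_of_pos hδ]
      linarith [(div_le_iff₀ hδ).2 ht₀]
  · rw [Metric.mem_closedBall, dist_pi_le_iff (by positivity)]
    intro i
    rw [Real.dist_eq]
    by_cases hi : i = i₀
    · subst hi
      simp only [slabCenter, Function.update_self]
      rw [← sub_sub]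
      exact abs_sub_mul_round_div_le _ hδ
    · simpa only [slabCenter, Function.update_of_ne hi] using hj i hi

theorem exists_finset_slab_subset_iUnion_closedBall (a : Fin n → ℝ) {i₀ : Fin n}
    (hmax : ∀ i, |a i| ≤ |a i₀|) (ha : a i₀ ≠ 0) {R δ : ℝ} (hR : 0 ≤ R) (hδ : 0 < δ) :
    ∃ S : Finset (Fin n → ℝ),
      (S.card : ℝ) ≤ (2 * (n * |a i₀| * R + |a i₀| * δ) + 1) * (n + 4) *
        (2 * (R / δ) + 2) ^ (n - 1) ∧
      {α | ‖α‖ ≤ R ∧ dnint (∑ i, a i * α i) ≤ |a i₀| * δ} ⊆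
        ⋃ v ∈ S, Metric.closedBall v (δ / 2) := by
  refine ⟨(slabIndex i₀ (n * |a i₀| * R + |a i₀| * δ) (R / δ + 1 / 2) ((n + 3) / 2)).image
    (slabCenter a i₀ δ), ?_, ?_⟩
  · calc _ ≤ ((slabIndex i₀ (n * |a i₀| * R + |a i₀| * δ) (R / δ + 1 / 2)
          ((n + 3) / 2)).card : ℝ) := by exact_mod_cast Finset.card_image_le
      _ ≤ _ := card_slabIndex_le i₀ (by positivity) (by positivity) (by positivity)
      _ = _ := by ring
  · refine (slab_subset_iUnion_closedBall_slabCenter a hmax ha hδ).trans ?_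
    simp only [Finset.set_biUnion_finset_image, subset_refl]

end Slab

section Height

variable {n : ℕ}

theorem natAbs_le_Hgt (x : Fin n → ℤ) (i : Fin n) : (x i).natAbs ≤ Hgt x :=
  Finset.le_sup (f := fun i => (x i).natAbs) (Finset.mem_univ i)

theorem abs_le_Hgt (x : Fin n → ℤ) (i : Fin n) : |(x i : ℝ)| ≤ Hgt x := by
  rw [← Int.cast_abs, Int.abs_eq_natAbs, Int.cast_natCast]
  exact_mod_cast natAbs_le_Hgt x i

theorem Hgt_le_iff {x : Fin n → ℤ} {N : ℕ} : Hgt x ≤ N ↔ ∀ i, (x i).natAbs ≤ N :=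
  Finset.sup_le_iff.trans (by simp)

theorem Hgt_eq_zero_iff {x : Fin n → ℤ} : Hgt x = 0 ↔ x = 0 := by
  rw [← Nat.le_zero, Hgt_le_iff, funext_iff]
  simp

theorem exists_natAbs_eq_Hgt {x : Fin n → ℤ} (hx : x ≠ 0) : ∃ i, (x i).natAbs = Hgt x := by
  have : Nonempty (Fin n) := by
    by_contra h
    exact hx (funext fun i => (h ⟨i⟩).elim)
  obtain ⟨i, -, hi⟩ := Finset.exists_mem_eq_sup Finset.univ Finset.univ_nonempty
    (fun i => (x i).natAbs)
  exact ⟨i, hi.symm⟩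

theorem tendsto_Hgt_cofinite : Tendsto (Hgt : (Fin n → ℤ) → ℕ) Filter.cofinite atTop := by
  refine tendsto_atTop.2 fun N => Filter.eventually_cofinite.2 ?_
  refine ((Fintype.piFinset fun _ : Fin n => Finset.Icc (-(N : ℤ)) N).finite_toSet).subset ?_
  intro x hx
  have hle : Hgt x ≤ N := (not_le.1 hx).le
  simp only [Finset.mem_coe, Fintype.mem_piFinset, Finset.mem_Icc]
  intro i
  have := Hgt_le_iff.1 hle i
  omega

theorem encard_Hgt_preimage_le {h : ℕ} (hh : h ≠ 0) :
    (Hgt ⁻¹' {h} : Set (Fin n → ℤ)).encard ≤ (2 * n * (2 * h + 1) ^ (n - 1) : ℕ) := by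
  let T : Finset (Fin n → ℤ) := Finset.univ.biUnion fun i =>
    Fintype.piFinset (Function.update (fun _ => Finset.Icc (-(h : ℤ)) h) i {-(h : ℤ), (h : ℤ)})
  have hsub : Hgt ⁻¹' {h} ⊆ (T : Set (Fin n → ℤ)) := by
    intro x (hx : Hgt x = h)
    obtain ⟨i, hi⟩ := exists_natAbs_eq_Hgt (Hgt_eq_zero_iff.not.1 (hx ▸ hh))
    refine Finset.mem_biUnion.2 ⟨i, Finset.mem_univ i, Fintype.mem_piFinset.2 fun k => ?_⟩
    by_cases hk : k = i
    · subst hk; simp; omega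
    · have := natAbs_le_Hgt x k
      simp [Function.update_of_ne hk]; omega
  have hcard : T.card ≤ 2 * n * (2 * h + 1) ^ (n - 1) := by
    refine Finset.card_biUnion_le.trans (le_of_eq ?_)
    have h2 : ({-(h : ℤ), (h : ℤ)} : Finset ℤ).card = 2 := Finset.card_pair (by omega)
    simp only [Fintype.card_piFinset_update_const, Int.card_Icc, h2, Finset.sum_const,
      Finset.card_univ, Fintype.card_fin, smul_eq_mul]
    rw [show (h + 1 - -h : ℤ).toNat = 2 * h + 1 by omega]
    ring
  calc (Hgt ⁻¹' {h} : Set (Fin n → ℤ)).encard ≤ (T : Set (Fin n → ℤ)).encard :=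
        Set.encard_le_encard hsub
    _ = T.card := Set.encard_coe_eq_coe_finsetCard T
    _ ≤ _ := by exact_mod_cast hcard

theorem tsum_comp_Hgt_le (n : ℕ) {c : ℕ → ℝ≥0∞} (hc : c 0 = 0) :
    ∑' x : Fin n → ℤ, c (Hgt x) ≤ ∑' h, ((2 * n * (2 * h + 1) ^ (n - 1) : ℕ) : ℝ≥0∞) * c h := by
  rw [← ENNReal.tsum_fiberwise _ Hgt]
  refine ENNReal.tsum_le_tsum fun h => ?_
  have hfib : ∑' x : (Hgt ⁻¹' {h} : Set (Fin n → ℤ)), c (Hgt (x : Fin n → ℤ)) =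
      (Hgt ⁻¹' {h} : Set (Fin n → ℤ)).encard * c h := by
    rw [← ENNReal.tsum_set_const]
    exact tsum_congr fun x => by rw [show Hgt (x : Fin n → ℤ) = h from x.2]
  rw [hfib]
  rcases eq_or_ne h 0 with rfl | hh
  · simp [hc]
  · gcongr
    rw [← ENat.toENNReal_coe]
    exact ENat.toENNReal_le.2 (encard_Hgt_preimage_le hh)

end Height

/-- The set `ℒ_{n,ℓ}(ψ)` with the cone condition dropped. -/
def approximable (n : ℕ) (ψ : ℕ → ℝ) : Set (Fin n → ℝ) :=
  {α | {x : Fin n → ℤ | dnint (∑ i, (x i : ℝ) * α i) ≤ ψ (Hgt x)}.Infinite}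

section Approximation

variable {n : ℕ}

theorem tendsto_div_natCast_of_antitone {ψ : ℕ → ℝ} (hψ : ∀ h, 0 ≤ ψ h) (hmono : Antitone ψ) :
    Tendsto (fun h : ℕ => ψ h / h) atTop (𝓝 0) :=
  squeeze_zero (fun h => div_nonneg (hψ h) h.cast_nonneg)
    (fun h => div_le_div_of_nonneg_right (hmono h.zero_le) h.cast_nonneg)
    (tendsto_const_div_atTop_nhds_zero_nat (ψ 0))

theorem exists_finset_approx_subset_iUnion_closedBall {ψ : ℕ → ℝ} (hpos : ∀ h, 0 < ψ h)
    (hmono : Antitone ψ) {x : Fin n → ℤ} (hx : x ≠ 0) {R : ℝ} (hR : 0 ≤ R) :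
    ∃ S : Finset (Fin n → ℝ),
      (S.card : ℝ) ≤ (2 * n * R + 2 * ψ 0 + 1) * (n + 4) * (2 * R + 2 * ψ 0) ^ (n - 1) *
        Hgt x / (ψ (Hgt x) / Hgt x) ^ (n - 1) ∧
      {α | ‖α‖ ≤ R ∧ dnint (∑ i, (x i : ℝ) * α i) ≤ ψ (Hgt x)} ⊆
        ⋃ v ∈ S, Metric.closedBall v (ψ (Hgt x) / Hgt x / 2) := by
  obtain ⟨i₀, hi₀⟩ := exists_natAbs_eq_Hgt hx
  set h := Hgt x
  have hh : (1 : ℝ) ≤ h := by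
    exact_mod_cast Nat.one_le_iff_ne_zero.2 (Hgt_eq_zero_iff.not.2 hx)
  have habs : |(x i₀ : ℝ)| = h := by rw [← hi₀, Nat.cast_natAbs, Int.cast_abs]
  set δ := ψ h / h
  have hδ : 0 < δ := div_pos (hpos h) (by linarith)
  have hhδ : (h : ℝ) * δ = ψ h := mul_div_cancel₀ _ (by positivity)
  have hψ : ψ h ≤ ψ 0 := hmono h.zero_le
  have hδψ : δ ≤ ψ 0 := (div_le_self (hpos h).le hh).trans hψ
  obtain ⟨S, hcard, hsub⟩ := exists_finset_slab_subset_iUnion_closedBall (fun i => (x i : ℝ))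
    (i₀ := i₀) (fun i => habs ▸ abs_le_Hgt x i) (abs_pos.1 (habs ▸ by positivity)) hR hδ
  rw [habs, hhδ] at hcard hsub
  refine ⟨S, hcard.trans ?_, hsub⟩
  calc (2 * (n * h * R + ψ h) + 1) * (n + 4) * (2 * (R / δ) + 2) ^ (n - 1)
      ≤ ((2 * n * R + 2 * ψ 0 + 1) * h) * (n + 4) * ((2 * R + 2 * ψ 0) / δ) ^ (n - 1) := by
        have := hpos 0
        gcongr ?_ * _ * ?_ ^ _
        · nlinarith
        · rw [le_div_iff₀ hδ, add_mul, mul_assoc, div_mul_cancel₀ _ hδ.ne']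
          linarith
    _ = _ := by rw [div_pow]; ring

theorem card_height_mul_cost_le {ψ : ℕ → ℝ} (f : ℝ → ℝ) {K : ℝ} (hK : 0 ≤ K) {h : ℕ}
    (hψ : 0 ≤ ψ h) :
    ((2 * n * (2 * h + 1) ^ (n - 1) : ℕ) : ℝ≥0∞) *
        (ENNReal.ofReal (K * h / (ψ h / h) ^ (n - 1)) * ENNReal.ofReal (f (ψ h / h))) ≤
      ENNReal.ofReal (2 * n * 3 ^ (n - 1) * K) *
        ENNReal.ofReal ((h : ℝ) ^ n * (f (ψ h / h) / (ψ h / h) ^ (n - 1))) := by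
  rcases eq_or_ne h 0 with rfl | hh
  · simp
  have hh' : (1 : ℝ) ≤ h := by exact_mod_cast Nat.one_le_iff_ne_zero.2 hh
  have hpow : (n : ℝ) * (h ^ (n - 1) * h) = n * h ^ n := by
    rcases eq_or_ne n 0 with rfl | hn
    · simp
    · rw [pow_sub_one_mul hn]
  have hcount : 2 * n * (2 * h + 1) ^ (n - 1) * (K * h / (ψ h / h) ^ (n - 1)) ≤
      2 * n * 3 ^ (n - 1) * K * (h ^ n / (ψ h / h) ^ (n - 1)) :=
    calc _ ≤ 2 * n * (3 * h) ^ (n - 1) * (K * h / (ψ h / h) ^ (n - 1)) := by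
          gcongr; linarith
      _ = 2 * 3 ^ (n - 1) * K / (ψ h / h) ^ (n - 1) * (n * (h ^ (n - 1) * h)) := by ring
      _ = _ := by rw [hpow]; ring
  calc _ = ENNReal.ofReal (2 * n * (2 * h + 1) ^ (n - 1) * (K * h / (ψ h / h) ^ (n - 1))) *
          ENNReal.ofReal (f (ψ h / h)) := by
        rw [ENNReal.ofReal_mul (by positivity), ← mul_assoc, ← ENNReal.ofReal_natCast]
        push_cast
        ring_nf
    _ ≤ ENNReal.ofReal (2 * n * 3 ^ (n - 1) * K * (h ^ n / (ψ h / h) ^ (n - 1))) *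
          ENNReal.ofReal (f (ψ h / h)) := by
        gcongr
    _ = _ := by
        rw [← ENNReal.ofReal_mul (by positivity), ← ENNReal.ofReal_mul (by positivity)]
        congr 1
        ring

theorem tsum_approx_cost_ne_top {ψ : ℕ → ℝ} (hpos : ∀ h, 0 < ψ h) {f : ℝ → ℝ}
    (hconv : Summable fun r : ℕ => (r : ℝ) ^ n * (f (ψ r / r) / (ψ r / r) ^ (n - 1)))
    {K : ℝ} (hK : 0 ≤ K) :
    ∑' x : Fin n → ℤ, ENNReal.ofReal (K * Hgt x / (ψ (Hgt x) / Hgt x) ^ (n - 1)) *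
      ENNReal.ofReal (f (ψ (Hgt x) / Hgt x)) ≠ ∞ := by
  have hsum : ∑' h : ℕ, ENNReal.ofReal ((h : ℝ) ^ n * (f (ψ h / h) / (ψ h / h) ^ (n - 1))) ≠ ∞ :=
    ENNReal.tsum_coe_ne_top_iff_summable.2 hconv.toNNReal
  refine ne_top_of_le_ne_top (ENNReal.mul_ne_top
    (ENNReal.ofReal_ne_top (r := 2 * n * 3 ^ (n - 1) * K)) hsum) ?_
  calc _ ≤ _ := tsum_comp_Hgt_le n (c := fun h : ℕ =>
          ENNReal.ofReal (K * h / (ψ h / h) ^ (n - 1)) * ENNReal.ofReal (f (ψ h / h))) (by simp)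
    _ ≤ _ := ENNReal.tsum_le_tsum fun h => card_height_mul_cost_le f hK (hpos h).le
    _ = _ := ENNReal.tsum_mul_left

theorem mkMetric_closedBall_inter_approximable_eq_zero {ψ : ℕ → ℝ} (hpos : ∀ h, 0 < ψ h)
    (hmono : Antitone ψ) {f : ℝ → ℝ} (hfm : MonotoneOn f (Set.Ici 0))
    (hconv : Summable fun r : ℕ => (r : ℝ) ^ n * (f (ψ r / r) / (ψ r / r) ^ (n - 1)))
    {R : ℝ} (hR : 0 ≤ R) :
    Measure.mkMetric (fun d : ℝ≥0∞ => ENNReal.ofReal (f d.toReal))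
      (Metric.closedBall (0 : Fin n → ℝ) R ∩ approximable n ψ) = 0 := by
  choose! S hScard hSsub using fun x (hx : x ≠ 0) =>
    exists_finset_approx_subset_iUnion_closedBall hpos hmono hx hR
  refine Measure.mkMetric_eq_zero_of_infinitely_covered
    (fun x => if x = 0 then ∅ else (S x).image (Metric.closedBall · (ψ (Hgt x) / Hgt x / 2)))
    (fun x => ENNReal.ofReal (ψ (Hgt x) / Hgt x)) ?_ ?_ ?_ ?_
  · have := (ENNReal.tendsto_ofReal (tendsto_div_natCast_of_antitone (fun h => (hpos h).le)
      hmono)).comp (tendsto_Hgt_cofinite (n := n))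
    rwa [ENNReal.ofReal_zero] at this
  · intro x t ht
    split_ifs at ht
    · simp at ht
    obtain ⟨v, -, rfl⟩ := Finset.mem_image.1 ht
    exact Metric.ediam_closedBall_half_le v _
  · rintro α ⟨hαR, hα⟩
    refine (hα.sdiff (Set.finite_singleton 0)).mono ?_
    rintro x ⟨hx, hx0 : x ≠ 0⟩
    obtain ⟨v, hv, hαv⟩ := Set.mem_iUnion₂.1 (hSsub x hx0 ⟨mem_closedBall_zero_iff.1 hαR, hx⟩)
    exact ⟨_, by simpa [hx0] using ⟨v, hv, rfl⟩, hαv⟩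
  · refine ne_top_of_le_ne_top (tsum_approx_cost_ne_top hpos hconv
      (K := (2 * n * R + 2 * ψ 0 + 1) * (n + 4) * (2 * R + 2 * ψ 0) ^ (n - 1))
      (by have := hpos 0; positivity))
      (ENNReal.tsum_le_tsum fun x => ?_)
    split_ifs with hx0
    · simp
    refine (sum_ofReal_comp_ediam_closedBall_le hfm (S x)
      (by have := hpos (Hgt x); positivity)).trans ?_
    gcongr
    rw [← ENNReal.ofReal_natCast]
    exact ENNReal.ofReal_le_ofReal (hScard x hx0)

end Approximation

theorem hausdorff_f_measure_zero_of_convergence_general (n ℓ : ℕ)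
    (ψ : ℕ → ℝ) (hpos : ∀ h, 0 < ψ h) (hmono : Antitone ψ)
    (f : ℝ → ℝ) (hfm : MonotoneOn f (Set.Ici 0))
    (hconv : Summable fun r : ℕ => (r : ℝ) ^ n * (f (ψ r / r) / (ψ r / r) ^ (n - 1))) :
    Measure.mkMetric (fun d : ℝ≥0∞ => ENNReal.ofReal (f d.toReal))
      {α : Fin n → ℝ | {x : Fin n → ℤ | cone ℓ x ∧
        dnint (∑ i, (x i : ℝ) * α i) ≤ ψ (Hgt x)}.Infinite} = 0 := by
  refine measure_mono_null (fun α hα => ?_) (measure_iUnion_null fun R : ℕ =>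
    mkMetric_closedBall_inter_approximable_eq_zero hpos hmono hfm hconv R.cast_nonneg)
  exact Set.mem_iUnion.2 ⟨⌈‖α‖⌉₊, mem_closedBall_zero_iff.2 (Nat.le_ceil _),
    hα.mono fun x hx => hx.2⟩

theorem hausdorff_f_measure_zero_of_convergence (n ℓ : ℕ) (hℓ : 1 ≤ ℓ) (hn : ℓ ≤ n)
    (ψ : ℕ → ℝ) (hpos : ∀ h, 0 < ψ h) (hmono : Antitone ψ)
    (f : ℝ → ℝ) (hf0 : f 0 = 0) (hfc : ContinuousOn f (Set.Ici 0))
    (hfm : MonotoneOn f (Set.Ici 0))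
    (hscale : MonotoneOn (fun r => f r / r ^ n) (Set.Ioi (0 : ℝ)))
    (hgc : ContinuousOn (fun r => f r / r ^ (n - 1)) (Set.Ici 0))
    (hgm : MonotoneOn (fun r => f r / r ^ (n - 1)) (Set.Ici 0))
    (hconv : Summable fun r : ℕ => (r : ℝ) ^ n * (f (ψ r / r) / (ψ r / r) ^ (n - 1))) :
    Measure.mkMetric (fun d : ℝ≥0∞ => ENNReal.ofReal (f d.toReal))
      {α : Fin n → ℝ | {x : Fin n → ℤ | cone ℓ x ∧
        dnint (∑ i, (x i : ℝ) * α i) ≤ ψ (Hgt x)}.Infinite} = 0 :=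
  hausdorff_f_measure_zero_of_convergence_general n ℓ ψ hpos hmono f hfm hconv
end

section
/- For any positive integer a and any integers 1 ≤ ℓ ≤ n − 1, the polynomial Xⁿ − 2(aX − 1)^ℓ is irreducible over ℚ. -/
/-! Eisenstein at 2: `Xⁿ - 2(aX - 1)^ℓ` is monic of degree `n > ℓ`, its lower coefficients are twice
those of `(aX - 1)^ℓ`, and its constant term is `±2`. Gauss's lemma then passes irreducibility
from `ℤ[X]` to `ℚ[X]`. -/

open Polynomial

section Eisenstein

variable {R : Type*} [CommRing R] {p : R} {q : R[X]} {n : ℕ}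

lemma natDegree_C_mul_lt (hq : q.natDegree < n) : (C p * q).natDegree < n :=
  (natDegree_C_mul_le p q).trans_lt hq

lemma monic_X_pow_sub_C_mul (hq : q.natDegree < n) : (X ^ n - C p * q).Monic :=
  monic_X_pow_sub <| degree_le_natDegree.trans_lt <| by exact_mod_cast natDegree_C_mul_lt hq

lemma natDegree_X_pow_sub_C_mul [Nontrivial R] (hq : q.natDegree < n) :
    (X ^ n - C p * q).natDegree = n := by
  rw [natDegree_sub_eq_left_of_natDegree_lt] <;> rw [natDegree_X_pow]
  exact natDegree_C_mul_lt hq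

lemma coeff_X_pow_sub_C_mul_of_lt {i : ℕ} (hi : i < n) :
    (X ^ n - C p * q).coeff i = -(p * q.coeff i) := by
  rw [coeff_sub, coeff_X_pow, if_neg hi.ne, coeff_C_mul, zero_sub]

lemma isEisensteinAt_X_pow_sub_C_mul [IsDomain R] (hp : Prime p) (hq : q.natDegree < n)
    (hq0 : ¬ p ∣ q.coeff 0) : (X ^ n - C p * q).IsEisensteinAt (Ideal.span {p}) := by
  refine (monic_X_pow_sub_C_mul hq).isEisensteinAt_of_mem_of_notMem
    (Ideal.span_singleton_ne_top hp.not_isUnit) (fun hi ↦ ?_) ?_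
  · rw [natDegree_X_pow_sub_C_mul hq] at hi
    rw [coeff_X_pow_sub_C_mul_of_lt hi, Ideal.neg_mem_iff, Ideal.mem_span_singleton]
    exact dvd_mul_right _ _
  · rw [coeff_X_pow_sub_C_mul_of_lt ((Nat.zero_le _).trans_lt hq), Ideal.neg_mem_iff,
      Ideal.span_singleton_pow, Ideal.mem_span_singleton, sq]
    exact fun h ↦ hq0 (mul_dvd_mul_iff_left hp.ne_zero |>.mp h)

theorem irreducible_X_pow_sub_C_mul [IsDomain R] (hp : Prime p) (hq : q.natDegree < n)
    (hq0 : ¬ p ∣ q.coeff 0) : Irreducible (X ^ n - C p * q) :=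
  (isEisensteinAt_X_pow_sub_C_mul hp hq hq0).irreducible
    ((Ideal.span_singleton_prime hp.ne_zero).mpr hp) (monic_X_pow_sub_C_mul hq).isPrimitive
    (by rw [natDegree_X_pow_sub_C_mul hq]; exact (Nat.zero_le _).trans_lt hq)

end Eisenstein

theorem irreducible_map_X_pow_sub_C_mul {p : ℤ} (hp : Prime p) {q : ℤ[X]} {n : ℕ}
    (hq : q.natDegree < n) (hq0 : ¬ p ∣ q.coeff 0) :
    Irreducible ((X ^ n - C p * q).map (Int.castRingHom ℚ)) :=
  (IsPrimitive.Int.irreducible_iff_irreducible_map_cast (monic_X_pow_sub_C_mul hq).isPrimitive).mp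
    (irreducible_X_pow_sub_C_mul hp hq hq0)

theorem poly_irreducible_general (n ℓ a : ℕ) (hℓ : 1 ≤ ℓ) (hn : ℓ ≤ n - 1) :
    Irreducible ((X : ℚ[X]) ^ n - C 2 * (C (a : ℚ) * X - 1) ^ ℓ) := by
  have hlin : (C (a : ℤ) * X - 1).natDegree ≤ 1 := by
    simpa [sub_eq_add_neg] using natDegree_linear_le (a := (a : ℤ)) (b := -1)
  have hdeg : ((C (a : ℤ) * X - 1) ^ ℓ).natDegree < n :=
    (natDegree_pow_le_of_le ℓ hlin).trans_lt (by omega)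
  have hcoeff : ((C (a : ℤ) * X - 1) ^ ℓ).coeff 0 = (-1) ^ ℓ := by
    simp [coeff_zero_eq_eval_zero]
  have hodd : ¬ (2 : ℤ) ∣ ((C (a : ℤ) * X - 1) ^ ℓ).coeff 0 := fun h ↦
    Int.prime_two.not_isUnit (isUnit_of_dvd_unit h (hcoeff ▸ isUnit_neg_one.pow ℓ))
  simpa [Polynomial.map_sub, map_ofNat C] using
    irreducible_map_X_pow_sub_C_mul Int.prime_two hdeg hodd

theorem poly_irreducible (n ℓ a : ℕ) (ha : 1 ≤ a) (hℓ : 1 ≤ ℓ) (hn : ℓ ≤ n - 1) :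
    Irreducible ((X : ℚ[X]) ^ n - C 2 * (C (a : ℚ) * X - 1) ^ ℓ) :=
  poly_irreducible_general n ℓ a hℓ hn
end
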